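/- arXiv:0905.0085 — 2 statements merged into one kernel-verified Lean document; each statement's English description precedes it below -/
import Mathlib

section
/- Let M : Fin k → Fin n → ℤ be a weighing scheme all of whose entries lie in {-1, 0, 1} and each of whose rows sums to zero (∑ i, M j i = 0 for every j). Then for every counterfeit scenario (g, c, w) and every weighing j : Fin k, the outcome satisfies Real.sign (∑ i, (M j i : ℝ) * w i) = Real.sign (w c - g) * (M j c : ℝ). In words: the outcome of each weighing equals the sign of the counterfeit's weight deviation multiplied by the counterfeit coin's entry in that weighing, independently of the genuine weight g. -/
/-- A weighing scheme: every entry lies in {-1, 0, 1}. -/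
def IsScheme {k n : ℕ} (M : Fin k → Fin n → ℤ) : Prop :=
  ∀ j i, M j i ∈ ({-1, 0, 1} : Set ℤ)

/-- A scheme is balanced: each weighing puts equally many coins on each pan. -/
def IsBalanced {k n : ℕ} (M : Fin k → Fin n → ℤ) : Prop :=
  ∀ j, (Finset.univ.filter (fun i => M j i = 1)).card =
       (Finset.univ.filter (fun i => M j i = -1)).card

/-- A counterfeit scenario: genuine weight `g`, counterfeit coin `c`, weights `w`. -/
def IsScenario {n : ℕ} (g : ℝ) (c : Fin n) (w : Fin n → ℝ) : Prop :=
  (∀ i, i ≠ c → w i = g) ∧ w c ≠ g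

/-- The scheme identifies the counterfeit coin and its weight deviation. -/
def Identifies {k n : ℕ} (M : Fin k → Fin n → ℤ) : Prop :=
  ∀ (g : ℝ) (c : Fin n) (w : Fin n → ℝ) (g' : ℝ) (c' : Fin n) (w' : Fin n → ℝ),
    IsScenario g c w → IsScenario g' c' w' →
    (∀ j, Real.sign (∑ i, (M j i : ℝ) * w i) = Real.sign (∑ i, (M j i : ℝ) * w' i)) →
    c = c' ∧ Real.sign (w c - g) = Real.sign (w' c' - g')

/-- For a scheme with rows summing to zero, the outcome of weighing j equals the
sign of the counterfeit's deviation times the counterfeit's entry in row j. -/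
theorem outcome_eq {k n : ℕ} (M : Fin k → Fin n → ℤ)
    (hM : IsScheme M) (hrow : ∀ j, ∑ i, M j i = 0)
    (g : ℝ) (c : Fin n) (w : Fin n → ℝ) (hw : IsScenario g c w) (j : Fin k) :
    Real.sign (∑ i, (M j i : ℝ) * w i) = Real.sign (w c - g) * (M j c : ℝ) := by
  have key : (∑ i, (M j i : ℝ) * w i) = (M j c : ℝ) * (w c - g) := by
    have h1 : (∑ i, (M j i : ℝ) * w i) = ∑ i, ((M j i : ℝ) * (w i - g) + (M j i : ℝ) * g) := by
      apply Finset.sum_congr rfl; intro i _; ring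
    rw [h1, Finset.sum_add_distrib, ← Finset.sum_mul]
    have h2 : (∑ i, (M j i : ℝ)) = 0 := by
      rw [← Int.cast_sum, hrow j, Int.cast_zero]
    rw [h2, zero_mul, add_zero]
    rw [Finset.sum_eq_single c]
    · intro i _ hi
      rw [hw.1 i hi, sub_self, mul_zero]
    · intro h; exact absurd (Finset.mem_univ c) h
  rw [key]
  rcases hM j c with h | h | h
  · rw [h]; push_cast; rw [neg_one_mul, Real.sign_neg]; ring
  · rw [h]; push_cast; simp [Real.sign_zero]
  · rw [h]; push_cast; simp
end

section
/- Let M be a balanced weighing scheme for n coins using k weighings. Then M identifies the counterfeit if and only if the signed columns of M are pairwise distinct, i.e., for all coins c, c' : Fin n and all signs ε, ε' ∈ ({-1, 1} : Set ℤ), if ε * M j c = ε' * M j c' for every j : Fin k, then c = c' and ε = ε'. -/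
lemma row_sum_zero {k n : ℕ} (M : Fin k → Fin n → ℤ) (hM : IsScheme M)
    (hbal : IsBalanced M) (j : Fin k) : ∑ i, M j i = 0 := by
  have h : ∀ i : Fin n, M j i =
      (if M j i = 1 then (1:ℤ) else 0) - (if M j i = -1 then 1 else 0) := by
    intro i
    have := hM j i
    simp only [Set.mem_insert_iff, Set.mem_singleton_iff] at this
    rcases this with h | h | h <;> simp [h]
  rw [Finset.sum_congr rfl (fun i _ => h i), Finset.sum_sub_distrib]
  rw [Finset.sum_boole, Finset.sum_boole]
  rw [hbal j]
  ring

lemma sum_eq_col {k n : ℕ} (M : Fin k → Fin n → ℤ) (hM : IsScheme M)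
    (hbal : IsBalanced M) (j : Fin k) (g : ℝ) (c : Fin n) (w : Fin n → ℝ)
    (hw : ∀ i, i ≠ c → w i = g) :
    ∑ i, (M j i : ℝ) * w i = (M j c : ℝ) * (w c - g) := by
  have h0 : ∑ i, (M j i : ℝ) = 0 := by
    exact_mod_cast congrArg (Int.cast : ℤ → ℝ) (row_sum_zero M hM hbal j)
  have h1 : ∑ i, (M j i : ℝ) * (w i - g) = (M j c : ℝ) * (w c - g) := by
    rw [Finset.sum_eq_single c]
    · intro i _ hi; rw [hw i hi]; ring
    · simp
  have h2 : ∑ i, (M j i : ℝ) * (w i - g)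
      = ∑ i, (M j i : ℝ) * w i - (∑ i, (M j i : ℝ)) * g := by
    rw [Finset.sum_mul, ← Finset.sum_sub_distrib]
    exact Finset.sum_congr rfl (fun i _ => by ring)
  rw [h2, h0] at h1
  linarith

lemma sign_mul_eq {m : ℤ} (hm : m ∈ ({-1, 0, 1} : Set ℤ)) {δ : ℝ} (hδ : δ ≠ 0) :
    Real.sign ((m : ℝ) * δ) = (((if 0 < δ then (1:ℤ) else -1) * m : ℤ) : ℝ) := by
  simp only [Set.mem_insert_iff, Set.mem_singleton_iff] at hm
  rcases hδ.lt_or_gt with hneg | hpos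
  · rw [if_neg (not_lt.mpr hneg.le)]
    rcases hm with h | h | h <;> subst h
    · rw [show ((-1:ℤ):ℝ) * δ = -δ by push_cast; ring,
        Real.sign_of_pos (by linarith)]; norm_num
    · simp [Real.sign_zero]
    · rw [show ((1:ℤ):ℝ) * δ = δ by push_cast; ring, Real.sign_of_neg hneg]; norm_num
  · rw [if_pos hpos]
    rcases hm with h | h | h <;> subst h
    · rw [show ((-1:ℤ):ℝ) * δ = -δ by push_cast; ring,
        Real.sign_of_neg (by linarith)]; norm_num
    · simp [Real.sign_zero]
    · rw [show ((1:ℤ):ℝ) * δ = δ by push_cast; ring, Real.sign_of_pos hpos]; norm_num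

lemma sign_pm {ε : ℤ} (h : ε ∈ ({-1, 1} : Set ℤ)) : Real.sign ((ε:ℝ)) = (ε:ℝ) := by
  rcases h with h | h <;> subst h
  · rw [Real.sign_of_neg (by norm_num)]; norm_num
  · rw [Real.sign_of_pos (by norm_num)]; norm_num

/-- A balanced weighing scheme identifies the counterfeit iff its signed columns
are pairwise distinct. -/
theorem identifies_iff_signed_columns_distinct {k n : ℕ} (M : Fin k → Fin n → ℤ)
    (hM : IsScheme M) (hbal : IsBalanced M) :
    Identifies M ↔
      ∀ (c c' : Fin n) (ε ε' : ℤ), ε ∈ ({-1, 1} : Set ℤ) → ε' ∈ ({-1, 1} : Set ℤ) →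
        (∀ j, ε * M j c = ε' * M j c') → c = c' ∧ ε = ε' := by
  constructor
  · -- Identifies → distinct columns
    intro hid c c' ε ε' hε hε' heq
    have hεne : (ε:ℝ) ≠ 0 := by
      rcases hε with h | h <;> simp_all
    have hε'ne : (ε':ℝ) ≠ 0 := by
      rcases hε' with h | h <;> simp_all
    set w : Fin n → ℝ := fun i => if i = c then (ε:ℝ) else 0 with hwdef
    set w' : Fin n → ℝ := fun i => if i = c' then (ε':ℝ) else 0 with hw'def
    have hwg : ∀ i, i ≠ c → w i = 0 := fun i hi => by simp [hwdef, hi]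
    have hw'g : ∀ i, i ≠ c' → w' i = 0 := fun i hi => by simp [hw'def, hi]
    have hs : IsScenario 0 c w := ⟨hwg, by simp [hwdef, hεne]⟩
    have hs' : IsScenario 0 c' w' := ⟨hw'g, by simp [hw'def, hε'ne]⟩
    have hout : ∀ j, Real.sign (∑ i, (M j i : ℝ) * w i)
        = Real.sign (∑ i, (M j i : ℝ) * w' i) := by
      intro j
      rw [sum_eq_col M hM hbal j 0 c w hwg, sum_eq_col M hM hbal j 0 c' w' hw'g]
      have h1 : w c - 0 = (ε:ℝ) := by simp [hwdef]
      have h2 : w' c' - 0 = (ε':ℝ) := by simp [hw'def]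
      rw [h1, h2]
      have : ((ε * M j c : ℤ) : ℝ) = ((ε' * M j c' : ℤ) : ℝ) := by
        exact_mod_cast congrArg (Int.cast : ℤ → ℝ) (heq j)
      push_cast at this
      congr 1
      linarith
    obtain ⟨hc, hsgn⟩ := hid 0 c w 0 c' w' hs hs' hout
    refine ⟨hc, ?_⟩
    have h1 : w c - 0 = (ε:ℝ) := by simp [hwdef]
    have h2 : w' c' - 0 = (ε':ℝ) := by simp [hw'def]
    rw [h1, h2, sign_pm hε, sign_pm hε'] at hsgn
    exact_mod_cast hsgn
  · -- distinct columns → Identifies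
    intro hdist g c w g' c' w' hs hs' hout
    obtain ⟨hwg, hwc⟩ := hs
    obtain ⟨hw'g, hwc'⟩ := hs'
    have hδ : w c - g ≠ 0 := sub_ne_zero.mpr hwc
    have hδ' : w' c' - g' ≠ 0 := sub_ne_zero.mpr hwc'
    set ε : ℤ := if 0 < w c - g then 1 else -1 with hεdef
    set ε' : ℤ := if 0 < w' c' - g' then 1 else -1 with hε'def
    have hεmem : ε ∈ ({-1, 1} : Set ℤ) := by
      rw [hεdef]; split_ifs <;> simp
    have hε'mem : ε' ∈ ({-1, 1} : Set ℤ) := by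
      rw [hε'def]; split_ifs <;> simp
    have heq : ∀ j, ε * M j c = ε' * M j c' := by
      intro j
      have h := hout j
      rw [sum_eq_col M hM hbal j g c w hwg, sum_eq_col M hM hbal j g' c' w' hw'g,
        sign_mul_eq (hM j c) hδ, sign_mul_eq (hM j c') hδ'] at h
      exact_mod_cast h
    obtain ⟨hc, hee⟩ := hdist c c' ε ε' hεmem hε'mem heq
    refine ⟨hc, ?_⟩
    have hsδ : Real.sign (w c - g) = (ε : ℝ) := by
      rw [hεdef]
      rcases hδ.lt_or_gt with h | h
      · rw [if_neg (not_lt.mpr h.le), Real.sign_of_neg h]; norm_num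
      · rw [if_pos h, Real.sign_of_pos h]; norm_num
    have hsδ' : Real.sign (w' c' - g') = (ε' : ℝ) := by
      rw [hε'def]
      rcases hδ'.lt_or_gt with h | h
      · rw [if_neg (not_lt.mpr h.le), Real.sign_of_neg h]; norm_num
      · rw [if_pos h, Real.sign_of_pos h]; norm_num
    rw [hsδ, hsδ', hee]
end
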